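/- The number of isomorphism classes of paramedial quasigroups admitting an affine form over the Klein four-group ℤ/2 × ℤ/2 is 7. -/
import Mathlib

/-- `op` is a quasigroup operation: all left and right translations are bijective. -/
def IsQuasigroupOp {Q : Type*} (op : Q → Q → Q) : Prop :=
  (∀ a : Q, Function.Bijective fun x => op a x) ∧
  (∀ a : Q, Function.Bijective fun x => op x a)

/-- Isomorphism of binary structures: a bijection commuting with the operations. -/
def OpIso {A B : Type*} (op₁ : A → A → A) (op₂ : B → B → B) : Prop :=
  ∃ f : A ≃ B, ∀ x y, f (op₁ x y) = op₂ (f x) (f y)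

/-- The affine operation `x * y = φ(x) + ψ(y) + c` over an abelian group. -/
def affOp {G : Type*} [AddCommGroup G] (φ ψ : G ≃+ G) (c : G) : G → G → G :=
  fun x y => φ x + ψ y + c

/-- `op` is an affine form of a paramedial quasigroup over `G`:
`op = affOp φ ψ c` for automorphisms with `φ² = ψ²` (Němec–Kepka). -/
def IsAffineParamedialOp {G : Type*} [AddCommGroup G] (op : G → G → G) : Prop :=
  ∃ (φ ψ : G ≃+ G) (c : G), (∀ x, φ (φ x) = ψ (ψ x)) ∧ op = affOp φ ψ c

/-- `pqG G` is the number of isomorphism classes of paramedial quasigroups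
admitting an affine form over `G`. -/
noncomputable def pqG (G : Type*) [AddCommGroup G] : ℕ :=
  Nat.card (Quot fun o₁ o₂ : {op : G → G → G // IsAffineParamedialOp op} =>
    OpIso o₁.1 o₂.1)

/- ## Auxiliary development -/

abbrev KG := ZMod 2 × ZMod 2

instance opIsoDecidable {A B : Type*} [Fintype A] [Fintype B] [DecidableEq A] [DecidableEq B]
    (op₁ : A → A → A) (op₂ : B → B → B) : Decidable (OpIso op₁ op₂) := by
  unfold OpIso; infer_instance

lemma opIso_refl {A : Type*} (op : A → A → A) : OpIso op op :=
  ⟨Equiv.refl A, fun _ _ => rfl⟩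

lemma opIso_symm {A B : Type*} {op₁ : A → A → A} {op₂ : B → B → B}
    (h : OpIso op₁ op₂) : OpIso op₂ op₁ := by
  obtain ⟨f, hf⟩ := h
  exact ⟨f.symm, fun x y => f.injective (by simp [hf])⟩

lemma opIso_trans {A B C : Type*} {op₁ : A → A → A} {op₂ : B → B → B} {op₃ : C → C → C}
    (h : OpIso op₁ op₂) (h' : OpIso op₂ op₃) : OpIso op₁ op₃ := by
  obtain ⟨f, hf⟩ := h
  obtain ⟨g, hg⟩ := h'
  exact ⟨f.trans g, fun x y => by simp [Equiv.trans_apply, hf, hg]⟩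

def lin (p : KG × KG) (x : KG) : KG := x.1.val • p.1 + x.2.val • p.2

def Fop (p q : KG × KG) (c : KG) : KG → KG → KG := fun x y => lin p x + lin q y + c

def paramOK (p q : KG × KG) : Prop :=
  Function.Bijective (lin p) ∧ Function.Bijective (lin q) ∧
    ∀ x, lin p (lin p x) = lin q (lin q x)

instance (p q : KG × KG) : Decidable (paramOK p q) := by
  unfold paramOK; infer_instance

lemma smul_split : ∀ (a b : ZMod 2) (u : KG), (a + b).val • u = a.val • u + b.val • u := by
  decide

lemma lin_add (p : KG × KG) (x y : KG) : lin p (x + y) = lin p x + lin p y := by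
  simp only [lin, Prod.fst_add, Prod.snd_add, smul_split]
  abel

lemma decomp : ∀ x : KG, x = x.1.val • ((1, 0) : KG) + x.2.val • ((0, 1) : KG) := by
  decide

lemma addEquiv_eq_lin (φ : KG ≃+ KG) (x : KG) :
    φ x = lin (φ (1, 0), φ (0, 1)) x := by
  conv_lhs => rw [decomp x]
  rw [map_add, map_nsmul, map_nsmul]
  rfl

lemma IAP_iff (op : KG → KG → KG) :
    IsAffineParamedialOp op ↔ ∃ p q c, paramOK p q ∧ op = Fop p q c := by
  constructor
  · rintro ⟨φ, ψ, c, hpm, rfl⟩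
    have hφ : lin (φ (1, 0), φ (0, 1)) = ⇑φ := funext fun x => (addEquiv_eq_lin φ x).symm
    have hψ : lin (ψ (1, 0), ψ (0, 1)) = ⇑ψ := funext fun x => (addEquiv_eq_lin ψ x).symm
    refine ⟨(φ (1, 0), φ (0, 1)), (ψ (1, 0), ψ (0, 1)), c, ⟨?_, ?_, ?_⟩, ?_⟩
    · rw [hφ]; exact φ.bijective
    · rw [hψ]; exact ψ.bijective
    · intro x; rw [hφ, hψ]; exact hpm x
    · funext x y; simp [affOp, Fop, hφ, hψ]
  · rintro ⟨p, q, c, ⟨hp, hq, hpq⟩, rfl⟩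
    let φ : KG ≃+ KG := AddEquiv.ofBijective (AddMonoidHom.mk' (lin p) (lin_add p)) hp
    let ψ : KG ≃+ KG := AddEquiv.ofBijective (AddMonoidHom.mk' (lin q) (lin_add q)) hq
    have hφ : ∀ x, φ x = lin p x := fun _ => rfl
    have hψ : ∀ x, ψ x = lin q x := fun _ => rfl
    refine ⟨φ, ψ, c, fun x => by rw [hφ, hφ, hψ, hψ]; exact hpq x, ?_⟩
    funext x y
    simp [affOp, Fop, hφ, hψ]

def Param := {t : (KG × KG) × (KG × KG) × KG // paramOK t.1 t.2.1}

instance : Fintype Param := by unfold Param; infer_instance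

def opOf (t : Param) : KG → KG → KG := Fop t.1.1 t.1.2.1 t.1.2.2

instance pSetoid : Setoid Param where
  r t t' := OpIso (opOf t) (opOf t')
  iseqv := ⟨fun _ => opIso_refl _, opIso_symm, opIso_trans⟩

instance : DecidableRel (fun t t' : Param => t ≈ t') := fun t t' =>
  opIsoDecidable (opOf t) (opOf t')

instance : Fintype (Quotient pSetoid) := Quotient.fintype pSetoid

abbrev SubOp := {op : KG → KG → KG // IsAffineParamedialOp op}

def Phi (t : Param) : SubOp :=
  ⟨opOf t, (IAP_iff _).2 ⟨t.1.1, t.1.2.1, t.1.2.2, t.2, rfl⟩⟩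

lemma Phi_surj : Function.Surjective Phi := by
  rintro ⟨op, h⟩
  obtain ⟨p, q, c, hOK, rfl⟩ := (IAP_iff op).1 h
  exact ⟨⟨(p, q, c), hOK⟩, rfl⟩

noncomputable def sec : SubOp → Param := Function.surjInv Phi_surj

lemma opOf_sec (o : SubOp) : opOf (sec o) = o.1 := by
  have : Phi (sec o) = o := Function.surjInv_eq Phi_surj o
  exact congrArg Subtype.val this

noncomputable def quotEquiv :
    (Quot fun o₁ o₂ : SubOp => OpIso o₁.1 o₂.1) ≃ Quotient pSetoid where
  toFun := Quot.lift (fun o => Quotient.mk pSetoid (sec o)) (by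
    intro o₁ o₂ h
    apply Quotient.sound
    show OpIso (opOf (sec o₁)) (opOf (sec o₂))
    rw [opOf_sec, opOf_sec]; exact h)
  invFun := Quotient.lift (fun t => Quot.mk _ (Phi t)) (by
    intro t t' h
    exact Quot.sound h)
  left_inv := by
    apply Quot.ind
    intro o
    exact congrArg (Quot.mk _) (Function.surjInv_eq Phi_surj o)
  right_inv := by
    apply Quotient.ind
    intro t
    show Quotient.mk pSetoid (sec (Phi t)) = Quotient.mk pSetoid t
    apply Quotient.sound
    show OpIso (opOf (sec (Phi t))) (opOf t)
    rw [opOf_sec]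
    exact opIso_refl _

set_option maxRecDepth 100000 in
set_option maxHeartbeats 4000000 in
lemma card_quot : Fintype.card (Quotient pSetoid) = 7 := by decide

theorem pq_klein_four : pqG (ZMod 2 × ZMod 2) = 7 := by
  have h := Nat.card_congr quotEquiv
  unfold pqG
  rw [h, Nat.card_eq_fintype_card, card_quot]
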